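/- Under the (A,B) signGD dynamics: (i) for every t ∈ ℕ there exist integers m, n ∈ ℤ with A(t) = A(0) + m·(a/3) and B(t) = B(0) + n·(b/2); (ii) consequently, if the initial pair (A(0), B(0)) is a random vector in ℝ² whose law is absolutely continuous with respect to two-dimensional Lebesgue measure, then almost surely A(t) ≠ 0 and B(t) ≠ 0 for every t ∈ ℕ; that is, neither A nor B can be reduced to exactly 0 almost surely. -/

import Mathlib

/-- The frequency-domain `(A,B)` signGD error dynamics with `a = σ₀²η`, `b = σ₁²η`:
`A(t+1) = A(t) − (a/3)(sgn(A+B) + sgn(A) + sgn(A−B))` and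
`B(t+1) = B(t) − (b/2)(sgn(A+B) − sgn(A−B))`. -/
def SignGDDyn (σ0sq σ1sq η : ℝ) (A B : ℕ → ℝ) : Prop :=
  (∀ t, A (t+1) = A t - σ0sq * η / 3 *
      (Real.sign (A t + B t) + Real.sign (A t) + Real.sign (A t - B t))) ∧
  (∀ t, B (t+1) = B t - σ1sq * η / 2 *
      (Real.sign (A t + B t) - Real.sign (A t - B t)))

open MeasureTheory

/-! Every step moves `A` by an integer multiple of `a/3` and `B` by an integer multiple of `b/2`,
so `A(t) = 0` forces `A(0)` into the countable set `(a/3)ℤ`, and likewise for `B`. Countable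
sets are Lebesgue-null on each axis, so an initial law absolutely continuous with respect to
Lebesgue measure on `ℝ²` avoids all of them almost surely. -/

theorem Real.exists_intCast_eq_sign (x : ℝ) : ∃ k : ℤ, (k : ℝ) = Real.sign x := by
  rcases Real.sign_apply_eq x with h | h | h <;> rw [h]
  exacts [⟨-1, by simp⟩, ⟨0, by simp⟩, ⟨1, by simp⟩]

theorem SignGDDyn.exists_int_offsets {σ0sq σ1sq η : ℝ} {A B : ℕ → ℝ}
    (h : SignGDDyn σ0sq σ1sq η A B) (t : ℕ) :
    ∃ m n : ℤ, A t = A 0 + m * (σ0sq * η / 3) ∧ B t = B 0 + n * (σ1sq * η / 2) := by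
  induction t with
  | zero => exact ⟨0, 0, by simp, by simp⟩
  | succ t ih =>
    obtain ⟨m, n, hm, hn⟩ := ih
    obtain ⟨k₁, hk₁⟩ := Real.exists_intCast_eq_sign (A t + B t)
    obtain ⟨k₂, hk₂⟩ := Real.exists_intCast_eq_sign (A t)
    obtain ⟨k₃, hk₃⟩ := Real.exists_intCast_eq_sign (A t - B t)
    refine ⟨m - (k₁ + k₂ + k₃), n - (k₁ - k₃), ?_, ?_⟩
    · rw [h.1 t, ← hk₁, ← hk₂, ← hk₃, hm]; push_cast; ring
    · rw [h.2 t, ← hk₁, ← hk₃, hn]; push_cast; ring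

theorem MeasureTheory.Measure.ae_fst_notMem_and_snd_notMem_prod {α β : Type*}
    [MeasurableSpace α] [MeasurableSpace β] {μ : Measure α} {ν : Measure β}
    [NullSingletonClass μ] [NullSingletonClass ν] {s : Set α} {t : Set β}
    (hs : s.Countable) (ht : t.Countable) :
    ∀ᵐ p ∂μ.prod ν, p.1 ∉ s ∧ p.2 ∉ t :=
  (Measure.quasiMeasurePreserving_fst.ae (hs.ae_notMem μ)).and
    (Measure.quasiMeasurePreserving_snd.ae (ht.ae_notMem ν))

theorem signGD_never_exactly_zero_general (σ0sq σ1sq η : ℝ) :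
    (∀ A B : ℕ → ℝ, SignGDDyn σ0sq σ1sq η A B →
      ∀ t, ∃ m n : ℤ,
        A t = A 0 + m * (σ0sq * η / 3) ∧ B t = B 0 + n * (σ1sq * η / 2)) ∧
    (∀ (Ω : Type) [MeasurableSpace Ω] (P : Measure Ω),
      IsProbabilityMeasure P →
      ∀ A B : Ω → ℕ → ℝ,
        (∀ ω, SignGDDyn σ0sq σ1sq η (A ω) (B ω)) →
        Measurable (fun ω => (A ω 0, B ω 0)) →
        (P.map (fun ω => (A ω 0, B ω 0))).AbsolutelyContinuous
          (volume : Measure (ℝ × ℝ)) →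
        ∀ᵐ ω ∂P, ∀ t, A ω t ≠ 0 ∧ B ω t ≠ 0) := by
  refine ⟨fun A B h => h.exists_int_offsets, ?_⟩
  intro Ω _ P _ A B hdyn hmeas habs
  let negMultiples (c : ℝ) : Set ℝ := Set.range fun m : ℤ => -(m * c)
  have h_init : ∀ᵐ x ∂P.map (fun ω => (A ω 0, B ω 0)),
      x.1 ∉ negMultiples (σ0sq * η / 3) ∧ x.2 ∉ negMultiples (σ1sq * η / 2) := by
    refine habs.ae_le ?_
    rw [Measure.volume_eq_prod]
    exact Measure.ae_fst_notMem_and_snd_notMem_prod (Set.countable_range _)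
      (Set.countable_range _)
  filter_upwards [ae_of_ae_map hmeas.aemeasurable h_init] with ω ⟨hA, hB⟩ t
  obtain ⟨m, n, hm, hn⟩ := (hdyn ω).exists_int_offsets t
  exact ⟨fun h0 => hA ⟨m, by linarith⟩, fun h0 => hB ⟨n, by linarith⟩⟩

/-- (i) Every iterate `(A(t), B(t))` lies on the lattice
`(A(0) + (a/3)ℤ) × (B(0) + (b/2)ℤ)`; (ii) hence if the initial pair is a random
vector whose law is absolutely continuous w.r.t. Lebesgue measure on `ℝ²`, then
almost surely neither `A` nor `B` is ever reduced to exactly `0`. -/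
theorem signGD_never_exactly_zero (σ0sq σ1sq η : ℝ)
    (h0 : 0 < σ0sq) (h1 : 0 < σ1sq) (hη : 0 < η) :
    (∀ A B : ℕ → ℝ, SignGDDyn σ0sq σ1sq η A B →
      ∀ t, ∃ m n : ℤ,
        A t = A 0 + m * (σ0sq * η / 3) ∧ B t = B 0 + n * (σ1sq * η / 2)) ∧
    (∀ (Ω : Type) [MeasurableSpace Ω] (P : Measure Ω),
      IsProbabilityMeasure P →
      ∀ A B : Ω → ℕ → ℝ,
        (∀ ω, SignGDDyn σ0sq σ1sq η (A ω) (B ω)) →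
        Measurable (fun ω => (A ω 0, B ω 0)) →
        (P.map (fun ω => (A ω 0, B ω 0))).AbsolutelyContinuous
          (volume : Measure (ℝ × ℝ)) →
        ∀ᵐ ω ∂P, ∀ t, A ω t ≠ 0 ∧ B ω t ≠ 0) :=
  signGD_never_exactly_zero_general σ0sq σ1sq η
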